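/- The probit intensity satisfies condition (A5): lim_{x→∞} (1/λ_probit(x))/x² = ∞. -/

import Mathlib

noncomputable def normalPdf (x : ℝ) : ℝ := Real.exp (-x ^ 2 / 2) / Real.sqrt (2 * Real.pi)

noncomputable def normalCdf (x : ℝ) : ℝ := ∫ t in Set.Iic x, normalPdf t

noncomputable def lambdaProbit (x : ℝ) : ℝ :=
  normalPdf x ^ 2 / (normalCdf x * (1 - normalCdf x))

/-!
For `x ≥ 0` we have `Φ(x) ≥ Φ(0) > 0`, and the Gaussian tail `1 - Φ(x)` is at least the mass of
`[x, x + 1]`, hence at least `φ(x + 1)`. So `1/λ(x) = Φ(x)(1 - Φ(x))/φ(x)²` is bounded below by a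
constant times `φ(x + 1)/φ(x)² = √(2π) · exp((x² - 2x - 1)/2)`, which eventually dominates
`exp x`, and `exp x / x² → ∞`.
-/

open MeasureTheory ProbabilityTheory Real Set Filter

lemma normalPdf_eq_gaussianPDFReal : normalPdf = gaussianPDFReal 0 1 := by
  ext x
  simp [normalPdf, gaussianPDFReal, div_eq_inv_mul]

lemma normalPdf_pos (x : ℝ) : 0 < normalPdf x := by
  unfold normalPdf
  positivity

lemma integrable_normalPdf : Integrable normalPdf :=
  normalPdf_eq_gaussianPDFReal ▸ integrable_gaussianPDFReal 0 1

lemma integral_normalPdf : ∫ x, normalPdf x = 1 := by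
  rw [normalPdf_eq_gaussianPDFReal]
  exact integral_gaussianPDFReal_eq_one 0 one_ne_zero

lemma one_sub_normalCdf (x : ℝ) : 1 - normalCdf x = ∫ t in Ioi x, normalPdf t := by
  rw [← integral_normalPdf, ← intervalIntegral.integral_Iic_add_Ioi
    integrable_normalPdf.integrableOn integrable_normalPdf.integrableOn, normalCdf,
    add_sub_cancel_left]

lemma normalCdf_pos (x : ℝ) : 0 < normalCdf x := by
  rw [normalCdf, setIntegral_pos_iff_support_of_nonneg_ae
    (ae_of_all _ fun t => (normalPdf_pos t).le) integrable_normalPdf.integrableOn,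
    Function.support_eq_univ fun t => (normalPdf_pos t).ne', univ_inter]
  simp

lemma normalCdf_mono : Monotone normalCdf := fun _ _ hab =>
  setIntegral_mono_set integrable_normalPdf.integrableOn
    (ae_of_all _ fun t => (normalPdf_pos t).le) (Iic_subset_Iic.mpr hab).eventuallyLE

lemma normalPdf_antitoneOn : AntitoneOn normalPdf (Ici 0) := by
  intro s hs t _ hst
  unfold normalPdf
  gcongr

lemma normalPdf_add_one_le_one_sub_normalCdf {x : ℝ} (hx : 0 ≤ x) :
    normalPdf (x + 1) ≤ 1 - normalCdf x := by
  rw [one_sub_normalCdf]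
  calc normalPdf (x + 1) = normalPdf (x + 1) * volume.real (Ioc x (x + 1)) := by simp
    _ ≤ ∫ t in Ioc x (x + 1), normalPdf t :=
        setIntegral_ge_of_const_le_real measurableSet_Ioc (by simp)
          (fun t ht => normalPdf_antitoneOn (hx.trans ht.1.le) (by simp; linarith) ht.2)
          integrable_normalPdf.integrableOn
    _ ≤ ∫ t in Ioi x, normalPdf t :=
        setIntegral_mono_set integrable_normalPdf.integrableOn
          (ae_of_all _ fun t => (normalPdf_pos t).le) Ioc_subset_Ioi_self.eventuallyLE

lemma normalCdf_zero_mul_le_one_div_lambdaProbit {x : ℝ} (hx : 0 ≤ x) :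
    normalCdf 0 * (normalPdf (x + 1) / normalPdf x ^ 2) ≤ 1 / lambdaProbit x := by
  rw [lambdaProbit, one_div_div, ← mul_div_assoc]
  exact div_le_div_of_nonneg_right
    (mul_le_mul (normalCdf_mono hx) (normalPdf_add_one_le_one_sub_normalCdf hx)
      (normalPdf_pos _).le (normalCdf_pos x).le) (by positivity)

lemma normalPdf_add_one_div_sq (x : ℝ) :
    normalPdf (x + 1) / normalPdf x ^ 2 = √(2 * π) * exp ((x ^ 2 - 2 * x - 1) / 2) := by
  have hs : √(2 * π) ≠ 0 := by positivity
  have hexp : exp ((x ^ 2 - 2 * x - 1) / 2) * exp (-x ^ 2 / 2) ^ 2 = exp (-(x + 1) ^ 2 / 2) := by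
    rw [← exp_nat_mul, ← exp_add]
    ring_nf
  simp only [normalPdf, div_pow, ← hexp]
  field_simp

theorem probit_A5 :
    Filter.Tendsto (fun x : ℝ => (1 / lambdaProbit x) / x ^ 2)
      Filter.atTop Filter.atTop := by
  have hc : 0 < normalCdf 0 * √(2 * π) := mul_pos (normalCdf_pos 0) (by positivity)
  refine tendsto_atTop_mono' _ ?_ ((tendsto_exp_div_pow_atTop 2).const_mul_atTop hc)
  filter_upwards [eventually_ge_atTop 5] with x hx
  have hexp : exp x ≤ exp ((x ^ 2 - 2 * x - 1) / 2) := exp_le_exp.mpr (by nlinarith)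
  calc normalCdf 0 * √(2 * π) * (exp x / x ^ 2)
      ≤ normalCdf 0 * (normalPdf (x + 1) / normalPdf x ^ 2) / x ^ 2 := by
        rw [normalPdf_add_one_div_sq, ← mul_assoc, mul_div_assoc]
        gcongr
    _ ≤ 1 / lambdaProbit x / x ^ 2 := by
        gcongr
        exact normalCdf_zero_mul_le_one_div_lambdaProbit (by linarith)
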